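/- Define ψ(x, z) = Σ_{n=1}^∞ e^{−πn²x}·cos(sqrt(πx)·n·z) for Re(x) > 0 and z ∈ ℂ. Then ψ(x, z) = (e^{−z²/4}/sqrt(x))·ψ(1/x, i·z) + e^{−z²/4}/(2·sqrt(x)) − 1/2 for all real x > 0. -/

import Mathlib

/-!
Pairing the terms `n` and `-n` of the Jacobi theta series shows that `1 + 2 ψ(x, z)` is
`θ(w, i x)` with `w = √(π x) z / (2π)`. The theorem is then the modular transformation
`θ(w, τ) = (-i τ)^{-1/2} e^{-π i w² / τ} θ(w / τ, -1 / τ)` at `τ = i x`, since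
`w / τ = -√(π / x) (i z) / (2π)` and `θ` is even in its first argument.
-/

open Real Complex

noncomputable def psiTheta (x z : ℂ) : ℂ :=
  ∑' n : ℕ, Complex.exp (-(π : ℂ) * ((n : ℂ) + 1) ^ 2 * x) *
    Complex.cos (((π : ℂ) * x) ^ (1 / 2 : ℂ) * ((n : ℂ) + 1) * z)

lemma jacobiTheta₂_term_add_jacobiTheta₂_term_neg (n : ℤ) (z τ : ℂ) :
    jacobiTheta₂_term n z τ + jacobiTheta₂_term (-n) z τ =
      2 * (cexp (π * I * n ^ 2 * τ) * cos (2 * π * n * z)) := by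
  simp only [jacobiTheta₂_term, Complex.cos, Int.cast_neg, neg_sq, Complex.exp_add]
  ring_nf

lemma hasSum_nat_jacobiTheta₂ (z : ℂ) {τ : ℂ} (hτ : 0 < τ.im) :
    HasSum (fun n : ℕ ↦
      2 * (cexp (π * I * ((n : ℂ) + 1) ^ 2 * τ) * cos (2 * π * ((n : ℂ) + 1) * z)))
      (jacobiTheta₂ z τ - 1) := by
  have h := (hasSum_jacobiTheta₂_term z hτ).nat_add_neg
  rw [← hasSum_nat_add_iff' 1] at h
  have h_zero : jacobiTheta₂_term 0 z τ = 1 := by simp [jacobiTheta₂_term]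
  simp only [jacobiTheta₂_term_add_jacobiTheta₂_term_neg, Finset.sum_range_one, h_zero] at h
  convert h using 1
  · rfl -- the `AddCommMonoid` instance of `hasSum_nat_add_iff'` comes from a group structure
  · push_cast; rfl
  · norm_num
    ring

lemma one_add_two_mul_psiTheta {x : ℂ} (hx : 0 < x.re) (z : ℂ) :
    1 + 2 * psiTheta x z = jacobiTheta₂ ((π * x) ^ (1 / 2 : ℂ) * z / (2 * π)) (I * x) := by
  have hπ : (π : ℂ) ≠ 0 := ofReal_ne_zero.mpr pi_ne_zero
  rw [psiTheta, ← tsum_mul_left, eq_comm, ← sub_eq_iff_eq_add',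
    (hasSum_nat_jacobiTheta₂ _ (by simpa using hx)).tsum_eq.symm]
  congr 1 with n
  congr 3
  · ring_nf; rw [I_sq]; ring
  · field_simp

lemma ofReal_cpow_one_half {a : ℝ} (ha : 0 ≤ a) : (a : ℂ) ^ (1 / 2 : ℂ) = √a := by
  rw [Real.sqrt_eq_rpow, ofReal_cpow ha]
  norm_num

lemma ofReal_mul_cpow_one_half {a x : ℝ} (ha : 0 ≤ a) (hx : 0 < x) :
    ((a : ℂ) * x) ^ (1 / 2 : ℂ) = (a * (1 / x) : ℂ) ^ (1 / 2 : ℂ) * x := by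
  have h_sqrt : √(a * x) = √(a / x) * x := by
    rw [Real.sqrt_eq_iff_mul_self_eq (by positivity) (by positivity), mul_mul_mul_comm,
      Real.mul_self_sqrt (by positivity)]
    field_simp
  rw [← ofReal_mul, ofReal_cpow_one_half (by positivity), h_sqrt, ofReal_mul,
    ← ofReal_cpow_one_half (by positivity)]
  push_cast
  ring_nf

theorem psi_transformation (x : ℝ) (hx : 0 < x) (z : ℂ) :
    psiTheta (x : ℂ) z =
      Complex.exp (-z ^ 2 / 4) / (Real.sqrt x : ℂ) * psiTheta (1 / (x : ℂ)) (Complex.I * z) +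
        Complex.exp (-z ^ 2 / 4) / (2 * (Real.sqrt x : ℂ)) - 1 / 2 := by
  have hπ : (π : ℂ) ≠ 0 := ofReal_ne_zero.mpr pi_ne_zero
  have hx0 : (x : ℂ) ≠ 0 := ofReal_ne_zero.mpr hx.ne'
  have h_sq : ((π * x : ℂ) ^ (1 / 2 : ℂ)) ^ 2 = π * x := by
    rw [one_div, cpow_ofNat_inv_pow]
  have h_tau : -I * (I * x) = x := by ring_nf; rw [I_sq]; ring
  have h_exp :
      -π * I * ((π * x : ℂ) ^ (1 / 2 : ℂ) * z / (2 * π)) ^ 2 / (I * x) = -z ^ 2 / 4 := by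
    rw [div_pow, mul_pow, h_sq]; field_simp; ring
  have h_arg : (π * x : ℂ) ^ (1 / 2 : ℂ) * z / (2 * π) / (I * x) =
      -((π * (1 / x) : ℂ) ^ (1 / 2 : ℂ) * (I * z) / (2 * π)) := by
    rw [ofReal_mul_cpow_one_half pi_pos.le hx]
    field_simp
    ring_nf; rw [I_sq]; ring
  have h_inv : -1 / (I * x) = I * (1 / x) := by
    field_simp; ring_nf; rw [I_sq]
  have hθ :=
    jacobiTheta₂_functional_equation ((π * x : ℂ) ^ (1 / 2 : ℂ) * z / (2 * π)) (I * x)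
  rw [h_tau, h_exp, h_arg, h_inv, jacobiTheta₂_neg_left, ofReal_cpow_one_half hx.le,
    ← one_add_two_mul_psiTheta (by simpa using hx),
    ← one_add_two_mul_psiTheta (by simpa using hx)] at hθ
  linear_combination hθ / 2
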